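/- arXiv:2005.00530 — 7 statements merged into one kernel-verified Lean document; each statement's English description precedes it below -/
import Mathlib

section
/- Let G = (V,E) be a finite regular directed graph of degree d ≥ 1, and suppose the vertices of V are colored red and blue. Let 0 < c ≤ 1, and let L ≥ 1 be an integer. If the number of walks of length L in G consisting entirely of red vertices is at least c·|V|·d^{L−1} (i.e., a simple random walk of length L is all red with probability at least c), then the number of walks of length L' := ⌊(1 + c²/10)·L⌋ consisting entirely of red vertices is at least (c²/10)·|V|·d^{L'−1} (i.e., a simple random walk of length L' is all red with probability at least c²/10). -/
/-!
Let `W n` be `|V|` times the probability that a random walk with `n + 1` vertices is all red, and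
`Q n` be `|V|` times the probability that its first `n + 1` vertices are red and its next one is
blue. Counting extensions by an out-neighbour gives `W n = W (n + 1) + Q n`; counting extensions by
an in-neighbour shows that `Q` is antitone. Telescoping then gives `n · Q n ≤ W 0 - W n` and
`W n - W (n + j) ≤ j · Q n`, so with `W 0 ≤ |V|` and `W n ≥ c |V|`, extending the walk by
`j ≤ c² (n + 1) / 10` steps costs at most `c² (1 - c) |V| / 5`, leaving at least `c² |V| / 10`.
-/

/-- `isRedWalk E red L X` says that `X : Fin L → V` is a walk in the directed graph
with edge relation `E` (i.e. consecutive vertices are joined by a directed edge)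
all of whose vertices are red. -/
def isRedWalk {V : Type*} (E : V → V → Prop) (red : V → Prop) (L : ℕ)
    (X : Fin L → V) : Prop :=
  (∀ (j : ℕ) (hj : j + 1 < L), E (X ⟨j, Nat.lt_of_succ_lt hj⟩) (X ⟨j + 1, hj⟩)) ∧
    ∀ j, red (X j)

theorem card_subtype_and_add_card_subtype_and_not {α : Type*} [Finite α] (P Q : α → Prop) :
    Nat.card {x // P x ∧ Q x} + Nat.card {x // P x ∧ ¬Q x} = Nat.card {x // P x} := by
  classical
  rw [← Nat.card_congr (Equiv.subtypeSubtypeEquivSubtypeInter P Q),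
    ← Nat.card_congr (Equiv.subtypeSubtypeEquivSubtypeInter P (¬Q ·)), ← Nat.card_sum]
  exact Nat.card_congr (Equiv.sumCompl fun x : Subtype P => Q x)

theorem card_subtype_prod_eq_mul {α β : Type*} [Finite α] [Finite β] (P : α → Prop)
    (R : α → β → Prop) {d : ℕ} (hR : ∀ a, Nat.card {b // R a b} = d) :
    Nat.card {x : β × α // P x.2 ∧ R x.2 x.1} = Nat.card {a // P a} * d := by
  classical
  have := Fintype.ofFinite α
  let e : {x : β × α // P x.2 ∧ R x.2 x.1} ≃ Σ a : {a // P a}, {b // R a b} :=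
    { toFun x := ⟨⟨x.1.2, x.2.1⟩, x.1.1, x.2.2⟩
      invFun y := ⟨(y.2.1, y.1.1), y.1.2, y.2.2⟩
      left_inv _ := rfl
      right_inv _ := rfl }
  rw [Nat.card_congr e, Nat.card_sigma]
  simp [hR, Nat.card_eq_fintype_card]

section Walks

variable {V : Type*} (E : V → V → Prop) (red : V → Prop)

def IsWalk {n : ℕ} (X : Fin (n + 1) → V) : Prop :=
  ∀ i : Fin n, E (X i.castSucc) (X i.succ)

variable {E}

theorem isRedWalk_succ_iff {n : ℕ} {X : Fin (n + 1) → V} :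
    isRedWalk E red (n + 1) X ↔ IsWalk E X ∧ ∀ i, red (X i) :=
  and_congr_left fun _ => ⟨fun h i => h i (by omega), fun h j hj => h ⟨j, by omega⟩⟩

theorem isWalk_snoc {n : ℕ} {Y : Fin (n + 1) → V} {w : V} :
    IsWalk E (Fin.snoc Y w : Fin (n + 2) → V) ↔ IsWalk E Y ∧ E (Y (Fin.last n)) w := by
  simp [IsWalk, Fin.forall_fin_succ', Fin.succ_castSucc, -Fin.castSucc_succ]

theorem isWalk_cons {n : ℕ} {v : V} {Y : Fin (n + 1) → V} :
    IsWalk E (Fin.cons v Y : Fin (n + 2) → V) ↔ E v (Y 0) ∧ IsWalk E Y := by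
  simp [IsWalk, Fin.forall_fin_succ]

variable (E) (d : ℕ)

noncomputable def redWalkCount (L : ℕ) : ℕ := Nat.card {X : Fin L → V // isRedWalk E red L X}

noncomputable def exitCount (n : ℕ) : ℕ :=
  Nat.card {X : Fin (n + 2) → V //
    (IsWalk E X ∧ ∀ i : Fin (n + 1), red (X i.castSucc)) ∧ ¬red (X (Fin.last _))}

noncomputable def redWalkDensity (n : ℕ) : ℝ := redWalkCount E red (n + 1) / (d : ℝ) ^ n

noncomputable def exitDensity (n : ℕ) : ℝ := exitCount E red n / (d : ℝ) ^ (n + 1)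

variable {d}

theorem mul_redWalkCount_eq [Finite V] (hout : ∀ v, Nat.card {w // E v w} = d) (n : ℕ) :
    d * redWalkCount E red (n + 1) = redWalkCount E red (n + 2) + exitCount E red n := by
  have hextend : Nat.card {X : Fin (n + 2) → V //
      IsWalk E X ∧ ∀ i : Fin (n + 1), red (X i.castSucc)} = redWalkCount E red (n + 1) * d := by
    rw [redWalkCount, ← card_subtype_prod_eq_mul _ (fun Y w => E (Y (Fin.last n)) w)
      fun Y => hout _]
    refine (Nat.card_congr ((Fin.snocEquiv fun _ => V).subtypeEquiv fun (w, Y) => ?_)).symm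
    change _ ↔ IsWalk E (Fin.snoc Y w : Fin (n + 2) → V) ∧
      ∀ i : Fin (n + 1), red (Fin.snoc (α := fun _ => V) Y w i.castSucc)
    simp only [isRedWalk_succ_iff, isWalk_snoc, Fin.snoc_castSucc]
    tauto
  have hred : Nat.card {X : Fin (n + 2) → V //
      (IsWalk E X ∧ ∀ i : Fin (n + 1), red (X i.castSucc)) ∧ red (X (Fin.last _))} =
      redWalkCount E red (n + 2) :=
    Nat.card_congr <| Equiv.subtypeEquivRight fun X => by
      rw [isRedWalk_succ_iff, Fin.forall_fin_succ' (P := fun i => red (X i)), and_assoc]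
  rw [← hred, exitCount, card_subtype_and_add_card_subtype_and_not, hextend, mul_comm]

theorem exitCount_succ_le [Finite V] (hin : ∀ v, Nat.card {w // E w v} = d) (n : ℕ) :
    exitCount E red (n + 1) ≤ d * exitCount E red n := by
  calc exitCount E red (n + 1)
      ≤ Nat.card {X : Fin (n + 3) → V // IsWalk E X ∧
          (∀ i : Fin (n + 1), red (X i.castSucc.succ)) ∧ ¬red (X (Fin.last _))} :=
        Nat.card_le_card_of_injective _ (Subtype.impEmbedding _ _ fun X ⟨⟨hX, hr⟩, hb⟩ =>
          ⟨hX, fun i => Fin.succ_castSucc i ▸ hr i.succ, hb⟩).injective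
    _ = exitCount E red n * d := by
        rw [exitCount, ← card_subtype_prod_eq_mul _ (fun Y v => E v (Y 0)) fun Y => hin _]
        refine (Nat.card_congr ((Fin.consEquiv fun _ => V).subtypeEquiv fun (v, Y) => ?_)).symm
        change _ ↔ IsWalk E (Fin.cons v Y : Fin (n + 3) → V) ∧
          (∀ i : Fin (n + 1), red (Fin.cons (α := fun _ => V) v Y i.castSucc.succ)) ∧
          ¬red (Fin.cons (α := fun _ => V) v Y (Fin.last (n + 1)).succ)
        simp only [isWalk_cons, Fin.cons_succ]
        tauto
    _ = d * exitCount E red n := mul_comm _ _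

theorem redWalkCount_one_le [Fintype V] : redWalkCount E red 1 ≤ Fintype.card V := by
  calc redWalkCount E red 1 ≤ Nat.card (Fin 1 → V) :=
      Nat.card_le_card_of_injective _ Subtype.val_injective
    _ = Fintype.card V := by simp

theorem le_redWalkDensity_iff (hd : 0 < d) {a : ℝ} {n : ℕ} :
    a ≤ redWalkDensity E red d n ↔ a * (d : ℝ) ^ n ≤ redWalkCount E red (n + 1) :=
  le_div_iff₀ (by positivity)

theorem redWalkDensity_eq_add_exitDensity [Finite V] (hd : 0 < d)
    (hout : ∀ v, Nat.card {w // E v w} = d) (n : ℕ) :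
    redWalkDensity E red d n = redWalkDensity E red d (n + 1) + exitDensity E red d n := by
  have hcount : (d : ℝ) * redWalkCount E red (n + 1) =
      redWalkCount E red (n + 2) + exitCount E red n := by
    exact_mod_cast mul_redWalkCount_eq E red hout n
  unfold redWalkDensity exitDensity
  field_simp
  rw [pow_succ, ← hcount]
  ring

theorem exitDensity_antitone [Finite V] (hd : 0 < d) (hin : ∀ v, Nat.card {w // E w v} = d) :
    Antitone (exitDensity E red d) := by
  refine antitone_nat_of_succ_le fun n => ?_
  have hcount : (exitCount E red (n + 1) : ℝ) ≤ d * exitCount E red n := by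
    exact_mod_cast exitCount_succ_le E red hin n
  unfold exitDensity
  rw [div_le_div_iff₀ (by positivity) (by positivity)]
  calc (exitCount E red (n + 1) : ℝ) * d ^ (n + 1) ≤ d * exitCount E red n * d ^ (n + 1) := by
        gcongr
    _ = exitCount E red n * d ^ (n + 1 + 1) := by ring

theorem exitDensity_nonneg (n : ℕ) : 0 ≤ exitDensity E red d n := by
  unfold exitDensity
  positivity

theorem redWalkDensity_zero_le [Fintype V] : redWalkDensity E red d 0 ≤ Fintype.card V := by
  simpa [redWalkDensity] using redWalkCount_one_le E red

end Walks

section Telescoping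

variable {p q : ℕ → ℝ} (hpq : ∀ n, p n = p (n + 1) + q n)
include hpq

theorem sub_eq_sum_range_of_eq_add (n j : ℕ) :
    p n - p (n + j) = ∑ i ∈ Finset.range j, q (n + i) := by
  induction j with
  | zero => simp
  | succ j ih => rw [Finset.sum_range_succ, ← ih, ← add_assoc, hpq (n + j)]; ring

theorem sub_le_mul_of_antitone (hq : Antitone q) (n j : ℕ) : p n - p (n + j) ≤ j * q n := by
  rw [sub_eq_sum_range_of_eq_add hpq]
  simpa using Finset.sum_le_card_nsmul (Finset.range j) (fun i => q (n + i)) (q n)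
    fun i _ => hq (Nat.le_add_right n i)

theorem mul_le_sub_of_antitone (hq : Antitone q) (n : ℕ) : n * q n ≤ p 0 - p n := by
  have hsum := sub_eq_sum_range_of_eq_add hpq 0 n
  have hle := Finset.card_nsmul_le_sum (Finset.range n) q (q n)
    fun i hi => hq (Finset.mem_range.1 hi).le
  simp only [zero_add, Finset.card_range, nsmul_eq_mul] at hsum hle
  linarith

theorem mul_sub_le_mul_sub_of_antitone (hq : Antitone q) (n j : ℕ) :
    n * (p n - p (n + j)) ≤ j * (p 0 - p n) :=
  calc n * (p n - p (n + j)) ≤ n * (j * q n) := by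
        gcongr; exact sub_le_mul_of_antitone hpq hq n j
    _ = j * (n * q n) := by ring
    _ ≤ j * (p 0 - p n) := by gcongr; exact mul_le_sub_of_antitone hpq hq n

theorem sq_div_ten_mul_le_of_antitone (hq : Antitone q) (hq0 : ∀ n, 0 ≤ q n) {c N : ℝ}
    (hc0 : 0 < c) (hc1 : c ≤ 1) (hN0 : 0 ≤ N) (hN : p 0 ≤ N) {n j : ℕ} (hn : c * N ≤ p n)
    (hj : (j : ℝ) ≤ c ^ 2 * (n + 1) / 10) :
    c ^ 2 / 10 * N ≤ p (n + j) := by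
  have hpn : p n ≤ p 0 := by nlinarith [mul_le_sub_of_antitone hpq hq n, hq0 n]
  rcases Nat.eq_zero_or_pos n with rfl | hn0
  · obtain rfl : j = 0 := by
      have : (j : ℝ) < 1 := by nlinarith
      exact_mod_cast Nat.lt_one_iff.1 (by exact_mod_cast this)
    simp only [add_zero]
    nlinarith
  · have hn0' : (1 : ℝ) ≤ n := by exact_mod_cast hn0
    have hloss : n * (p n - p (n + j)) ≤ n * (c ^ 2 / 5 * (N - p n)) :=
      calc n * (p n - p (n + j)) ≤ j * (p 0 - p n) := mul_sub_le_mul_sub_of_antitone hpq hq n j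
        _ ≤ c ^ 2 * n / 5 * (N - p n) :=
          mul_le_mul (by nlinarith) (by linarith) (by linarith) (by positivity)
        _ = n * (c ^ 2 / 5 * (N - p n)) := by ring
    have hloss' := le_of_mul_le_mul_left hloss (by positivity)
    nlinarith [mul_nonneg hN0 (by nlinarith : 0 ≤ c * (1 - 3 * c / 10 + c ^ 2 / 5))]

end Telescoping

/-- Bootstrapping for random walks on regular directed graphs: if `G` is a finite
regular directed graph of degree `d ≥ 1` whose vertices are coloured red or blue and
the number of all-red walks of length `L ≥ 1` is at least `c·|V|·d^{L−1}` (with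
`0 < c ≤ 1`), then the number of all-red walks of length `L' := ⌊(1 + c²/10)·L⌋` is
at least `(c²/10)·|V|·d^{L'−1}`. -/
theorem stmt2 {V : Type*} [Fintype V] (E : V → V → Prop) (d : ℕ) (hd : 1 ≤ d)
    (hout : ∀ v, Nat.card {w // E v w} = d) (hin : ∀ v, Nat.card {w // E w v} = d)
    (red : V → Prop) (c : ℝ) (hc0 : 0 < c) (hc1 : c ≤ 1) (L : ℕ) (hL : 1 ≤ L)
    (h : c * (Fintype.card V : ℝ) * (d : ℝ) ^ (L - 1) ≤
      (Nat.card {X : Fin L → V // isRedWalk E red L X} : ℝ)) :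
    (c ^ 2 / 10) * (Fintype.card V : ℝ) * (d : ℝ) ^ (⌊(1 + c ^ 2 / 10) * (L : ℝ)⌋₊ - 1) ≤
      (Nat.card {X : Fin ⌊(1 + c ^ 2 / 10) * (L : ℝ)⌋₊ → V //
        isRedWalk E red ⌊(1 + c ^ 2 / 10) * (L : ℝ)⌋₊ X} : ℝ) := by
  obtain ⟨n, rfl⟩ : ∃ n, L = n + 1 := ⟨L - 1, by omega⟩
  set L' := ⌊(1 + c ^ 2 / 10) * ((n + 1 : ℕ) : ℝ)⌋₊ with hL'
  have hLL' : n + 1 ≤ L' := Nat.le_floor (by push_cast; nlinarith)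
  obtain ⟨j, hj⟩ : ∃ j, L' = n + j + 1 := ⟨L' - (n + 1), by omega⟩
  have hjc : (j : ℝ) ≤ c ^ 2 * (n + 1) / 10 := by
    have hfloor := Nat.floor_le (a := (1 + c ^ 2 / 10) * ((n + 1 : ℕ) : ℝ)) (by positivity)
    rw [← hL', hj] at hfloor
    push_cast at hfloor
    linarith
  have hred := sq_div_ten_mul_le_of_antitone
    (redWalkDensity_eq_add_exitDensity E red hd hout) (exitDensity_antitone E red hd hin)
    (exitDensity_nonneg E red) hc0 hc1 (Nat.cast_nonneg _) (redWalkDensity_zero_le E red)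
    ((le_redWalkDensity_iff E red hd).2 (by simpa [redWalkCount] using h)) hjc
  rw [hj]
  simpa [redWalkCount] using (le_redWalkDensity_iff E red hd).1 hred
end

section
/- Let a_1,…,a_i be non-negative integers with d := max_j a_j ≥ 1. Let L denote the maximum length of a contiguous run a_{j_1+1},…,a_{j_1'} whose terms all lie in {0,d} and which contains at least one term equal to d (i.e., the length of the longest {0,d}-block containing at least one d). If L ≤ i−1, then after L iterations of consecutive differencing applied to a_1,…,a_i, every remaining term is at most d−1. -/
/-!
If a window `a_r, …, a_{r+k}` of terms in `[0, d]` differences down to `d` after `k` steps, then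
the whole window lies in `{0, d}` and contains a `d`: two terms of `[0, d]` are at distance `d`
only when they are `0` and `d`, and a distance in `{0, d}` from a term in `{0, d}` leads back
into `{0, d}`. The window of length `L + 1` under any term of the `L`-th difference sequence would
thus be a `{0, d}`-block containing a `d` that is longer than `L`.
-/

/-- `iterDiff i a` is the sequence obtained from `a` after `i` iterations of
consecutive differencing: `iterDiff i a r = f_i(a_r, a_{r+1}, …, a_{r+i})`. -/
def iterDiff (i : ℕ) (a : ℕ → ℕ) : ℕ → ℕ :=
  (fun b n => Nat.dist (b n) (b (n + 1)))^[i] a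

def diffSeq (a : ℕ → ℕ) (n : ℕ) : ℕ :=
  Nat.dist (a n) (a (n + 1))

lemma iterDiff_succ (k : ℕ) (a : ℕ → ℕ) : iterDiff (k + 1) a = iterDiff k (diffSeq a) :=
  Function.iterate_succ_apply _ k a

section Dist

variable {x y d : ℕ}

lemma Nat.dist_le_of_le (hx : x ≤ d) (hy : y ≤ d) : Nat.dist x y ≤ d := by
  unfold Nat.dist; omega

lemma Nat.eq_zero_and_eq_or_of_dist_eq (hx : x ≤ d) (hy : y ≤ d) (h : Nat.dist x y = d) :
    x = 0 ∧ y = d ∨ x = d ∧ y = 0 := by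
  unfold Nat.dist at h; omega

lemma Nat.zero_or_eq_iff_of_dist (hx : x ≤ d) (hy : y ≤ d)
    (h : Nat.dist x y = 0 ∨ Nat.dist x y = d) : (x = 0 ∨ x = d ↔ y = 0 ∨ y = d) := by
  unfold Nat.dist at h; omega

end Dist

lemma Nat.iff_of_forall_iff_succ {P : ℕ → Prop} {r n : ℕ}
    (h : ∀ j, r ≤ j → j < n → (P j ↔ P (j + 1))) {j : ℕ} (hrj : r ≤ j) (hjn : j ≤ n) :
    P j ↔ P r := by
  induction j, hrj using Nat.le_induction with
  | base => rfl
  | succ j hrj ih => exact (h j hrj hjn).symm.trans (ih (by omega))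

lemma iterDiff_le {d : ℕ} (k : ℕ) (a : ℕ → ℕ) (r : ℕ)
    (ha : ∀ j ∈ Set.Icc r (r + k), a j ≤ d) : iterDiff k a r ≤ d := by
  induction k generalizing a with
  | zero => exact ha r ⟨le_rfl, by omega⟩
  | succ k ih =>
    rw [iterDiff_succ]
    refine ih _ fun j ⟨hrj, hjk⟩ => Nat.dist_le_of_le ?_ ?_
    · exact ha j ⟨hrj, by omega⟩
    · exact ha (j + 1) ⟨by omega, by omega⟩

lemma zero_or_eq_of_iterDiff_eq {d : ℕ} (k : ℕ) (a : ℕ → ℕ) (r : ℕ)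
    (ha : ∀ j ∈ Set.Icc r (r + k), a j ≤ d) (hdiff : iterDiff k a r = d) :
    (∀ j ∈ Set.Icc r (r + k), a j = 0 ∨ a j = d) ∧ ∃ j ∈ Set.Icc r (r + k), a j = d := by
  induction k generalizing a with
  | zero =>
    have hjr (j : ℕ) (hj : j ∈ Set.Icc r (r + 0)) : j = r := by have := hj.1; have := hj.2; omega
    exact ⟨fun j hj => Or.inr (hjr j hj ▸ hdiff), r, ⟨le_rfl, le_add_right le_rfl⟩, hdiff⟩
  | succ k ih =>
    have ha' : ∀ j ∈ Set.Icc r (r + k), a j ≤ d ∧ a (j + 1) ≤ d := fun j ⟨hrj, hjk⟩ =>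
      ⟨ha j ⟨hrj, by omega⟩, ha (j + 1) ⟨by omega, by omega⟩⟩
    rw [iterDiff_succ] at hdiff
    obtain ⟨hdiffs, m, hm, hdm⟩ :=
      ih (diffSeq a) (fun j hj => Nat.dist_le_of_le (ha' j hj).1 (ha' j hj).2) hdiff
    have hsucc : ∀ j, r ≤ j → j < r + (k + 1) →
        (a j = 0 ∨ a j = d ↔ a (j + 1) = 0 ∨ a (j + 1) = d) := fun j hrj hjk =>
      have hj : j ∈ Set.Icc r (r + k) := ⟨hrj, by omega⟩
      Nat.zero_or_eq_iff_of_dist (ha' j hj).1 (ha' j hj).2 (hdiffs j hj)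
    have hpair := Nat.eq_zero_and_eq_or_of_dist_eq (ha' m hm).1 (ha' m hm).2 hdm
    obtain ⟨hrm, hmk⟩ := hm
    refine ⟨fun j ⟨hrj, hjk⟩ => ?_, ?_⟩
    · refine (Nat.iff_of_forall_iff_succ hsucc hrj hjk).2 ?_
      exact (Nat.iff_of_forall_iff_succ hsucc hrm (by omega)).1 (by omega)
    · rcases hpair with ⟨-, hm1⟩ | ⟨hm0, -⟩
      · exact ⟨m + 1, ⟨by omega, by omega⟩, hm1⟩
      · exact ⟨m, ⟨hrm, by omega⟩, hm0⟩

theorem stmt3_general (i : ℕ) (a : ℕ → ℕ) (d L : ℕ)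
    (hmax : ∀ j, j < i → a j ≤ d)
    -- `L` is an upper bound on the length of any `{0,d}`-block containing a `d` …
    (hub : ∀ l len, l + len ≤ i →
      (∀ j, l ≤ j → j < l + len → a j = 0 ∨ a j = d) →
      (∃ j, l ≤ j ∧ j < l + len ∧ a j = d) → len ≤ L) :
    ∀ r, r + L < i → iterDiff L a r ≤ d - 1 := by
  intro r hr
  have hwin : ∀ j ∈ Set.Icc r (r + L), a j ≤ d := fun j hj => hmax j (by have := hj.2; omega)
  by_contra hlt
  have hdiff : iterDiff L a r = d := le_antisymm (iterDiff_le L a r hwin) (by omega)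
  obtain ⟨hblock, j, hj, hdj⟩ := zero_or_eq_of_iterDiff_eq L a r hwin hdiff
  have := hub r (L + 1) (by omega) (fun j hrj hjL => hblock j ⟨hrj, by omega⟩)
    ⟨j, hj.1, by have := hj.2; omega, hdj⟩
  omega

/-- Let `a 0, …, a (i-1)` be non-negative integers with `d := max_j a j ≥ 1`.
Let `L` be the maximum length of a contiguous run of terms all lying in `{0, d}`
containing at least one term equal to `d`.  If `L ≤ i − 1`, then after `L`
iterations of consecutive differencing every remaining term is at most `d − 1`. -/
theorem stmt3 (i : ℕ) (a : ℕ → ℕ) (d L : ℕ) (hd : 1 ≤ d)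
    (hmax : ∀ j, j < i → a j ≤ d) (hattain : ∃ j, j < i ∧ a j = d)
    -- `L` is an upper bound on the length of any `{0,d}`-block containing a `d` …
    (hub : ∀ l len, l + len ≤ i →
      (∀ j, l ≤ j → j < l + len → a j = 0 ∨ a j = d) →
      (∃ j, l ≤ j ∧ j < l + len ∧ a j = d) → len ≤ L)
    -- … and this bound is attained.
    (hex : ∃ l, l + L ≤ i ∧ (∀ j, l ≤ j → j < l + L → a j = 0 ∨ a j = d) ∧
      ∃ j, l ≤ j ∧ j < l + L ∧ a j = d)
    (hLi : L ≤ i - 1) :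
    ∀ r, r + L < i → iterDiff L a r ≤ d - 1 :=
  stmt3_general i a d L hmax hub
end

section
/- Let a_1,…,a_n be non-negative integers, let d ≥ 1, and let i ≥ 0. Suppose that after i iterations of consecutive differencing applied to a_1,…,a_n there are L consecutive terms all divisible by d (a dℤ-block of length L). Then either the initial sequence a_1,…,a_n contains L+i consecutive terms all divisible by d, or there exists i' with 0 ≤ i' ≤ i−1 such that after i' iterations of consecutive differencing there are L+i−i' consecutive terms all nonzero. -/
lemma iterDiff_succ_apply (i : ℕ) (a : ℕ → ℕ) (r : ℕ) :
    iterDiff (i + 1) a r = Nat.dist (iterDiff i a r) (iterDiff i a (r + 1)) := by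
  simp only [iterDiff, Function.iterate_succ_apply']

lemma Nat.dvd_iff_of_dvd_dist {d x y : ℕ} (h : d ∣ Nat.dist x y) : d ∣ x ↔ d ∣ y := by
  wlog hxy : x ≤ y generalizing x y
  · exact (this (Nat.dist_comm x y ▸ h) (le_of_not_ge hxy)).symm
  rw [Nat.dist_eq_sub_of_le hxy] at h
  rw [← Nat.add_sub_cancel' hxy]
  exact (Nat.dvd_add_left h).symm

lemma dvd_iff_of_dvd_dist_on_block {b : ℕ → ℕ} {d p L : ℕ}
    (hdiff : ∀ r, p ≤ r → r < p + L → d ∣ Nat.dist (b r) (b (r + 1))) :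
    ∀ r, p ≤ r → r ≤ p + L → (d ∣ b r ↔ d ∣ b p) := by
  intro r hpr
  induction r, hpr using Nat.le_induction with
  | base => exact fun _ => Iff.rfl
  | succ r hpr ih =>
    intro hr
    exact (Nat.dvd_iff_of_dvd_dist (hdiff r hpr (by omega))).symm.trans (ih (by omega))

theorem dvd_block_or_ne_zero_block_of_iterDiff (a : ℕ → ℕ) (d : ℕ) (i L p : ℕ)
    (hblock : ∀ r, p ≤ r → r < p + L → d ∣ iterDiff i a r) :
    (∀ r, p ≤ r → r < p + L + i → d ∣ a r) ∨
      ∃ i' < i, ∀ r, p ≤ r → r < p + L + (i - i') → iterDiff i' a r ≠ 0 := by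
  induction i generalizing L with
  | zero => exact Or.inl hblock
  | succ k ih =>
    have hsame : ∀ r, p ≤ r → r ≤ p + L → (d ∣ iterDiff k a r ↔ d ∣ iterDiff k a p) :=
      dvd_iff_of_dvd_dist_on_block fun r h₁ h₂ => iterDiff_succ_apply k a r ▸ hblock r h₁ h₂
    by_cases hp : d ∣ iterDiff k a p
    · rcases ih (L + 1) fun r h₁ h₂ => (hsame r h₁ (by omega)).2 hp with hdvd | ⟨i', hi', hne⟩
      · exact Or.inl fun r h₁ h₂ => hdvd r h₁ (by omega)
      · exact Or.inr ⟨i', by omega, fun r h₁ h₂ => hne r h₁ (by omega)⟩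
    · refine Or.inr ⟨k, k.lt_succ_self, fun r h₁ h₂ h₀ => hp ?_⟩
      exact (hsame r h₁ (by omega)).1 (h₀ ▸ dvd_zero d)

theorem stmt4_general (n : ℕ) (a : ℕ → ℕ) (d : ℕ) (i L : ℕ)
    (p : ℕ) (hp : p + L + i ≤ n)
    (hblock : ∀ r, p ≤ r → r < p + L → d ∣ iterDiff i a r) :
    (∃ q, q + (L + i) ≤ n ∧ ∀ r, q ≤ r → r < q + (L + i) → d ∣ a r) ∨
      (∃ i', i' < i ∧ ∃ q, q + (L + i - i') + i' ≤ n ∧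
        ∀ r, q ≤ r → r < q + (L + i - i') → iterDiff i' a r ≠ 0) := by
  rcases dvd_block_or_ne_zero_block_of_iterDiff a d i L p hblock with hdvd | ⟨i', hi', hne⟩
  · exact Or.inl ⟨p, by omega, fun r h₁ h₂ => hdvd r h₁ (by omega)⟩
  · exact Or.inr ⟨i', hi', p, by omega, fun r h₁ h₂ => hne r h₁ (by omega)⟩

/-- Let `a 0, …, a (n-1)` be non-negative integers, `d ≥ 1`, `i ≥ 0`.  If after `i`
iterations of consecutive differencing there are `L` consecutive terms all divisible
by `d`, then either the initial sequence contains `L + i` consecutive terms all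
divisible by `d`, or there is some `i' < i` such that after `i'` iterations there are
`L + i − i'` consecutive terms, all nonzero. -/
theorem stmt4 (n : ℕ) (a : ℕ → ℕ) (d : ℕ) (hd : 1 ≤ d) (i L : ℕ) (hL : 1 ≤ L)
    (p : ℕ) (hp : p + L + i ≤ n)
    (hblock : ∀ r, p ≤ r → r < p + L → d ∣ iterDiff i a r) :
    (∃ q, q + (L + i) ≤ n ∧ ∀ r, q ≤ r → r < q + (L + i) → d ∣ a r) ∨
      (∃ i', i' < i ∧ ∃ q, q + (L + i - i') + i' ≤ n ∧
        ∀ r, q ≤ r → r < q + (L + i - i') → iterDiff i' a r ≠ 0) :=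
  stmt4_general n a d i L p hp hblock
end

section
/- For any i ≥ 1, there exists a subset J_i ⊆ {1, 2, …, i+1} containing both 1 and i+1, such that for all non-negative integers a_1,…,a_{i+1}, f_i(a_1,…,a_{i+1}) ≡ Σ_{j ∈ J_i} a_j (mod 2). -/
open Finset fwdDiff

namespace CharTwo

variable {R : Type*} [Ring R] [CharP R 2]

theorem natCast_dist_eq_sub (x y : ℕ) : (x.dist y : R) = y - x := by
  rcases le_total x y with h | h
  · rw [Nat.dist_eq_sub_of_le h, Nat.cast_sub h]
  · rw [Nat.dist_eq_sub_of_le_right h, Nat.cast_sub h, ← neg_eq (y - x : R), neg_sub]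

theorem sum_natCast_mul_eq_sum_filter_odd {ι : Type*} (s : Finset ι) (n : ι → ℕ) (x : ι → R) :
    ∑ k ∈ s, (n k : R) * x k = ∑ k ∈ s with Odd (n k), x k := by
  rw [sum_filter]
  refine sum_congr rfl fun k _ => ?_
  simp [natCast_eq_ite, ← Nat.not_even_iff_odd, ite_not]

theorem natCast_iterDiff_eq_fwdDiff_iter (i : ℕ) (a : ℕ → ℕ) :
    (fun n => (iterDiff i a n : R)) = (Δ_[1])^[i] (fun n => (a n : R)) := by
  induction i with
  | zero => rfl
  | succ i ih =>
    funext n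
    simp only [iterDiff, Function.iterate_succ_apply'] at ih ⊢
    rw [natCast_dist_eq_sub, ← ih]
    rfl

theorem natCast_iterDiff_eq_sum_choose (i : ℕ) (a : ℕ → ℕ) (r : ℕ) :
    (iterDiff i a r : R) = ∑ k ∈ range (i + 1), (i.choose k : R) * a (r + k) := by
  rw [congrFun (natCast_iterDiff_eq_fwdDiff_iter i a) r, fwdDiff_iter_eq_sum_shift]
  refine sum_congr rfl fun k _ => ?_
  simp [zsmul_eq_mul, neg_eq]

end CharTwo

open CharTwo

theorem stmt5_general (i : ℕ) :
    ∃ J : Finset ℕ, J ⊆ Finset.Icc 1 (i + 1) ∧ 1 ∈ J ∧ (i + 1) ∈ J ∧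
      ∀ a : ℕ → ℕ, iterDiff i a 1 ≡ (∑ j ∈ J, a j) [MOD 2] := by
  refine ⟨{j ∈ Icc 1 (i + 1) | Odd (i.choose (j - 1))}, filter_subset _ _, by simp, by simp,
    fun a => ?_⟩
  have reindex : ∑ j ∈ Icc 1 (i + 1), (i.choose (j - 1) : ZMod 2) * a j
      = ∑ k ∈ range (i + 1), (i.choose k : ZMod 2) * a (1 + k) := by
    rw [← Ico_add_one_right_eq_Icc, sum_Ico_eq_sum_range]
    simp
  rw [← ZMod.natCast_eq_natCast_iff, natCast_iterDiff_eq_sum_choose, ← reindex,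
    sum_natCast_mul_eq_sum_filter_odd, Nat.cast_sum]

/-- For any `i ≥ 1`, there is a subset `J ⊆ {1, …, i+1}` containing `1` and `i+1`
such that for all non-negative integers `a_1, …, a_{i+1}` (given as `a 1, …, a (i+1)`),
`f_i(a_1, …, a_{i+1}) ≡ ∑_{j ∈ J} a_j (mod 2)`. -/
theorem stmt5 (i : ℕ) (hi : 1 ≤ i) :
    ∃ J : Finset ℕ, J ⊆ Finset.Icc 1 (i + 1) ∧ 1 ∈ J ∧ (i + 1) ∈ J ∧
      ∀ a : ℕ → ℕ, iterDiff i a 1 ≡ (∑ j ∈ J, a j) [MOD 2] :=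
  stmt5_general i
end

section
/- There exists M₀ such that for all M ≥ M₀ the following holds. Let C be a positive integer with C ≤ log log M, and let I_1,…,I_r ⊆ {1,…,M} be pairwise disjoint intervals with r ≤ C and |I_t| ≤ C·e^{(log M)^{1/5}} for each t. Then there exist pairwise disjoint intervals J_1,…,J_s ⊆ {1,…,M}, each containing at least one of the I_t, such that: (i) for every t with 1 ≤ t ≤ r there is some m with I_t ⊆ J_m; and (ii) for every m with 1 ≤ m ≤ s, letting B_m denote the smallest interval containing all of the I_t that are contained in J_m, either L(B_m) − L(J_m) ≥ ((log M)²)^C·|B_m| or R(J_m) − R(B_m) ≥ ((log M)²)^C·|B_m|, and both inequalities hold if J_m contains neither 1 nor M. -/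
/-!
Let `S` bound the lengths of the `I_t`, let `Q = ⌈(log M)²⌉^C · C`, and consider the scales
`T_n = (10Q)^(n+1) S` for `n ≤ C²`. The at most `r² ≤ C²` gaps between the intervals cannot meet
all the windows `(T_n, T_(n+1)]`, so for some `j` no gap lies in `(T_j, T_(j+1)]`. Chaining
intervals along gaps of length at most `T_j` groups them into clusters whose hulls `B` have length
at most `r (S + T_j)`, while distinct hulls are more than `T_(j+1)` apart. Padding every hull by
`P = Q (S + T_j) ≥ ((log M)²)^C |B|` on both sides, clipped to `[1, M]`, gives disjoint `J_m`, and
since `T_(C²+1) ≤ M` for large `M`, at most one side of a hull gets clipped.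
-/

open Real Filter Finset Relation

theorem Equivalence.exists_surjective_fin_eq_iff {ι : Type*} [Finite ι] {r : ι → ι → Prop}
    (hr : Equivalence r) :
    ∃ (s : ℕ) (f : ι → Fin s), Function.Surjective f ∧ ∀ a b, f a = f b ↔ r a b :=
  let e := Finite.equivFin (Quotient ⟨r, hr⟩)
  ⟨_, e ∘ Quotient.mk _, e.surjective.comp Quotient.mk_surjective,
    fun _ _ => e.injective.eq_iff.trans Quotient.eq⟩

section Clusters

variable {ι κ : Type*} (I : ι → ℕ × ℕ) (g : ℕ)

def Linked (a b : ι) : Prop := (I b).1 ≤ (I a).2 + g ∧ (I a).1 ≤ (I b).2 + g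

instance : Std.Symm (Linked I g) := ⟨fun _ _ h => h.symm⟩

theorem equivalence_reflTransGen_linked : Equivalence (ReflTransGen (Linked I g)) :=
  ⟨fun _ => .refl, fun h => Std.Symm.symm _ _ h, .trans⟩

theorem exists_linked_cover {a w : ι} (h : ReflTransGen (Linked I g) a w) {x : ℕ}
    (hax : (I a).1 ≤ x) (hxw : x ≤ (I w).2) :
    ∃ b, ReflTransGen (Linked I g) a b ∧ (I b).1 ≤ x ∧ x ≤ (I b).2 + g := by
  by_contra! hx
  have hleft : ∀ b, ReflTransGen (Linked I g) a b → (I b).2 + g < x := by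
    intro b hb
    induction hb with
    | refl => exact hx a .refl hax
    | tail hab hbc ih => exact hx _ (hab.tail hbc) (by have := hbc.1; omega)
  have := hleft w h
  omega

def IsFiberHull (f : ι → κ) (B : κ → ℕ × ℕ) : Prop :=
  ∀ k, IsLeast {x | ∃ t, f t = k ∧ (I t).1 = x} (B k).1 ∧
    IsGreatest {x | ∃ t, f t = k ∧ (I t).2 = x} (B k).2

theorem exists_isFiberHull [Finite ι] {f : ι → κ} (hf : Function.Surjective f) :
    ∃ B, IsFiberHull I f B := by
  have (k : κ) : ∃ b : ℕ × ℕ, IsLeast {x | ∃ t, f t = k ∧ (I t).1 = x} b.1 ∧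
      IsGreatest {x | ∃ t, f t = k ∧ (I t).2 = x} b.2 := by
    obtain ⟨a, ha, ha_min⟩ :=
      Set.exists_min_image {t | f t = k} (fun t => (I t).1) (Set.toFinite _) (hf k)
    obtain ⟨w, hw, hw_max⟩ :=
      Set.exists_max_image {t | f t = k} (fun t => (I t).2) (Set.toFinite _) (hf k)
    exact ⟨((I a).1, (I w).2), ⟨⟨a, ha, rfl⟩, by rintro _ ⟨t, ht, rfl⟩; exact ha_min t ht⟩,
      ⟨⟨w, hw, rfl⟩, by rintro _ ⟨t, ht, rfl⟩; exact hw_max t ht⟩⟩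
  choose B hB using this
  exact ⟨B, hB⟩

namespace IsFiberHull

variable {I g} {f : ι → κ} {B : κ → ℕ × ℕ}

theorem left_le (hB : IsFiberHull I f B) (t : ι) : (B (f t)).1 ≤ (I t).1 :=
  (hB (f t)).1.2 ⟨t, rfl, rfl⟩

theorem le_right (hB : IsFiberHull I f B) (t : ι) : (I t).2 ≤ (B (f t)).2 :=
  (hB (f t)).2.2 ⟨t, rfl, rfl⟩

theorem bounds (hB : IsFiberHull I f B) {M : ℕ}
    (hI : ∀ t, 1 ≤ (I t).1 ∧ (I t).1 ≤ (I t).2 ∧ (I t).2 ≤ M) (k : κ) :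
    1 ≤ (B k).1 ∧ (B k).1 ≤ (B k).2 ∧ (B k).2 ≤ M := by
  obtain ⟨a, rfl, ha⟩ := (hB k).1.1
  obtain ⟨w, hw, hw'⟩ := (hB (f a)).2.1
  have := hB.le_right a
  have := hI a
  have := hI w
  omega

theorem right_add_one_le [Fintype ι] (hB : IsFiberHull I f B)
    (hf : ∀ a b, f a = f b → ReflTransGen (Linked I g) a b) {S : ℕ}
    (hS : ∀ t, (I t).2 + 1 ≤ (I t).1 + S) (k : κ) :
    (B k).2 + 1 ≤ (B k).1 + Fintype.card ι * (S + g) := by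
  obtain ⟨a, ha, hla⟩ := (hB k).1.1
  obtain ⟨w, hw, hrw⟩ := (hB k).2.1
  have hcover : Icc (B k).1 (B k).2 ⊆ univ.biUnion fun t => Icc (I t).1 ((I t).2 + g) := by
    intro x hx
    rw [mem_Icc] at hx
    obtain ⟨b, -, hb⟩ := exists_linked_cover I g (hf a w (ha.trans hw.symm))
      (hla ▸ hx.1) (hrw ▸ hx.2)
    exact mem_biUnion.mpr ⟨b, mem_univ _, mem_Icc.mpr hb⟩
  have hcard := (card_le_card hcover).trans <| card_biUnion_le.trans <|
    sum_le_card_nsmul _ _ (S + g) fun t _ => by rw [Nat.card_Icc]; have := hS t; omega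
  rw [Nat.card_Icc, card_univ, smul_eq_mul] at hcard
  omega

theorem right_add_lt_left (hB : IsFiberHull I f B)
    (hf : ∀ a b, f a = f b ↔ ReflTransGen (Linked I g) a b) (hI : ∀ t, (I t).1 ≤ (I t).2)
    {G : ℕ} (hgap : ∀ a b, ¬((I a).2 + g < (I b).1 ∧ (I b).1 ≤ (I a).2 + G))
    {k k' : κ} (hkk' : k ≠ k') (hle : (B k).1 ≤ (B k').1) : (B k).2 + G < (B k').1 := by
  obtain ⟨a, ha, hla⟩ := (hB k).1.1
  obtain ⟨w, hw, hrw⟩ := (hB k).2.1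
  obtain ⟨d, hd, hld⟩ := (hB k').1.1
  have hunlinked : ∀ c, f c = k → ¬Linked I g c d := fun c hc hcd =>
    hkk' (hc.symm.trans (((hf c d).2 (.single hcd)).trans hd))
  -- otherwise a member of the cluster `k` covers `(I d).1` and is therefore linked to `d`
  have hwd : (I w).2 < (I d).1 := by
    by_contra! hdw
    obtain ⟨b, hab, hb⟩ := exists_linked_cover I g ((hf a w).1 (ha.trans hw.symm))
      (by omega : (I a).1 ≤ (I d).1) hdw
    exact hunlinked b (((hf a b).2 hab).symm.trans ha) ⟨hb.2, by have := hI d; omega⟩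
  have hgwd : (I w).2 + g < (I d).1 := by
    by_contra! h
    exact hunlinked w hw ⟨h, by have := hI w; have := hI d; omega⟩
  have := hgap w d
  omega

theorem separated (hB : IsFiberHull I f B)
    (hf : ∀ a b, f a = f b ↔ ReflTransGen (Linked I g) a b) (hI : ∀ t, (I t).1 ≤ (I t).2)
    {G : ℕ} (hgap : ∀ a b, ¬((I a).2 + g < (I b).1 ∧ (I b).1 ≤ (I a).2 + G))
    {k k' : κ} (hkk' : k ≠ k') : (B k).2 + G < (B k').1 ∨ (B k').2 + G < (B k).1 :=
  (le_total (B k).1 (B k').1).imp (hB.right_add_lt_left hf hI hgap hkk')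
    (hB.right_add_lt_left hf hI hgap hkk'.symm)

end IsFiberHull

end Clusters

def pad (M P : ℕ) (b : ℕ × ℕ) : ℕ × ℕ := (max 1 (b.1 - P), min M (b.2 + P))

def IsPaddedCover {ι κ : Type*} (M : ℕ) (K : ℝ) (I : ι → ℕ × ℕ) (J : κ → ℕ × ℕ) : Prop :=
  (∀ m, 1 ≤ (J m).1 ∧ (J m).1 ≤ (J m).2 ∧ (J m).2 ≤ M) ∧
  (∀ m m', m ≠ m' → (J m).2 < (J m').1 ∨ (J m').2 < (J m).1) ∧
  (∀ m, ∃ t, (J m).1 ≤ (I t).1 ∧ (I t).2 ≤ (J m).2) ∧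
  (∀ t, ∃ m, (J m).1 ≤ (I t).1 ∧ (I t).2 ≤ (J m).2) ∧
  (∀ m, ∀ lB rB : ℕ,
    IsLeast {x | ∃ t, ((J m).1 ≤ (I t).1 ∧ (I t).2 ≤ (J m).2) ∧ (I t).1 = x} lB →
    IsGreatest {x | ∃ t, ((J m).1 ≤ (I t).1 ∧ (I t).2 ≤ (J m).2) ∧ (I t).2 = x} rB →
    ((K * ((rB : ℝ) - lB + 1) ≤ (lB : ℝ) - (J m).1 ∨
      K * ((rB : ℝ) - lB + 1) ≤ ((J m).2 : ℝ) - rB) ∧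
    ((J m).1 ≠ 1 ∧ (J m).2 ≠ M →
      K * ((rB : ℝ) - lB + 1) ≤ (lB : ℝ) - (J m).1 ∧
      K * ((rB : ℝ) - lB + 1) ≤ ((J m).2 : ℝ) - rB)))

theorem pad_margins {M P W : ℕ} {K : ℝ} {b : ℕ × ℕ} (hb : b.2 + 1 ≤ b.1 + W)
    (hWM : W + 2 * P ≤ M) (hK : 0 ≤ K) (hKP : K * W ≤ P) :
    (K * ((b.2 : ℝ) - b.1 + 1) ≤ (b.1 : ℝ) - (pad M P b).1 ∨
      K * ((b.2 : ℝ) - b.1 + 1) ≤ ((pad M P b).2 : ℝ) - b.2) ∧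
    ((pad M P b).1 ≠ 1 ∧ (pad M P b).2 ≠ M →
      K * ((b.2 : ℝ) - b.1 + 1) ≤ (b.1 : ℝ) - (pad M P b).1 ∧
      K * ((b.2 : ℝ) - b.1 + 1) ≤ ((pad M P b).2 : ℝ) - b.2) := by
  have hmargin : K * ((b.2 : ℝ) - b.1 + 1) ≤ P := by
    have : (b.2 : ℝ) - b.1 + 1 ≤ W := by
      have : (b.2 : ℝ) + 1 ≤ b.1 + W := by exact_mod_cast hb
      linarith
    nlinarith
  have hleft (h : P < b.1) : K * ((b.2 : ℝ) - b.1 + 1) ≤ (b.1 : ℝ) - (pad M P b).1 := by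
    have hpad : (pad M P b).1 + P = b.1 := by simp only [pad]; omega
    have : (b.1 : ℝ) - (pad M P b).1 = P := by rw [← hpad, Nat.cast_add]; ring
    linarith
  have hright (h : b.2 + P ≤ M) : K * ((b.2 : ℝ) - b.1 + 1) ≤ ((pad M P b).2 : ℝ) - b.2 := by
    have hpad : (pad M P b).2 = b.2 + P := by simp only [pad]; omega
    rw [hpad, Nat.cast_add]
    linarith
  refine ⟨?_, fun ⟨h1, h2⟩ => ⟨hleft ?_, hright ?_⟩⟩
  · by_cases h : P < b.1
    · exact .inl (hleft h)
    · exact .inr (hright (by omega))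
  · simp only [pad] at h1; omega
  · simp only [pad] at h2; omega

namespace IsFiberHull

variable {ι κ : Type*} {I : ι → ℕ × ℕ} {f : ι → κ} {B : κ → ℕ × ℕ} {M P G : ℕ}

theorem pad_subset_iff (hB : IsFiberHull I f B)
    (hI : ∀ t, 1 ≤ (I t).1 ∧ (I t).1 ≤ (I t).2 ∧ (I t).2 ≤ M)
    (hsep : ∀ k k', k ≠ k' → (B k).2 + G < (B k').1 ∨ (B k').2 + G < (B k).1)
    (hPG : 2 * P < G) (t : ι) (k : κ) :
    (pad M P (B k)).1 ≤ (I t).1 ∧ (I t).2 ≤ (pad M P (B k)).2 ↔ f t = k := by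
  refine ⟨fun ht => ?_, fun ht => ?_⟩
  · by_contra hne
    have := hB.left_le t
    have := hB.le_right t
    have := hI t
    simp only [pad] at ht
    rcases hsep _ _ hne with h | h <;> omega
  · have := hB.left_le t
    have := hB.le_right t
    have := hI t
    subst ht
    simp only [pad]
    omega

theorem isPaddedCover_pad (hB : IsFiberHull I f B)
    (hI : ∀ t, 1 ≤ (I t).1 ∧ (I t).1 ≤ (I t).2 ∧ (I t).2 ≤ M) {W : ℕ}
    (hW : ∀ k, (B k).2 + 1 ≤ (B k).1 + W)
    (hsep : ∀ k k', k ≠ k' → (B k).2 + G < (B k').1 ∨ (B k').2 + G < (B k).1)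
    (hPG : 2 * P < G) (hWM : W + 2 * P ≤ M) {K : ℝ} (hK : 0 ≤ K) (hKP : K * W ≤ P) :
    IsPaddedCover M K I fun k => pad M P (B k) := by
  have hsub := hB.pad_subset_iff hI hsep hPG
  refine ⟨fun k => ?_, fun k k' hkk' => ?_, fun k => ?_, fun t => ⟨f t, (hsub t _).2 rfl⟩,
    fun k lB rB hl hr => ?_⟩
  · have := hB.bounds hI k
    simp only [pad]
    omega
  · have := hsep k k' hkk'
    simp only [pad]
    omega
  · obtain ⟨t, ht, -⟩ := (hB k).1.1
    exact ⟨t, (hsub t k).2 ht⟩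
  · simp only [hsub] at hl hr
    rw [hl.unique (hB k).1, hr.unique (hB k).2]
    exact pad_margins (hW k) hWM hK hKP

end IsFiberHull

theorem exists_isPaddedCover {ι : Type*} [Fintype ι] {M S g G P : ℕ} {K : ℝ}
    (I : ι → ℕ × ℕ) (hI : ∀ t, 1 ≤ (I t).1 ∧ (I t).1 ≤ (I t).2 ∧ (I t).2 ≤ M)
    (hS : ∀ t, (I t).2 + 1 ≤ (I t).1 + S)
    (hgap : ∀ a b, ¬((I a).2 + g < (I b).1 ∧ (I b).1 ≤ (I a).2 + G))
    (hPG : 2 * P < G) (hWM : Fintype.card ι * (S + g) + 2 * P ≤ M)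
    (hK : 0 ≤ K) (hKP : K * (Fintype.card ι * (S + g) : ℕ) ≤ P) :
    ∃ (s : ℕ) (J : Fin s → ℕ × ℕ), IsPaddedCover M K I J := by
  obtain ⟨s, f, hf_surj, hf⟩ := (equivalence_reflTransGen_linked I g).exists_surjective_fin_eq_iff
  obtain ⟨B, hB⟩ := exists_isFiberHull I hf_surj
  have hlr : ∀ t, (I t).1 ≤ (I t).2 := fun t => (hI t).2.1
  exact ⟨s, _, hB.isPaddedCover_pad hI (hB.right_add_one_le (fun a b => (hf a b).1) hS)
    (fun _ _ => hB.separated hf hlr hgap) hPG hWM hK hKP⟩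

theorem exists_le_forall_notMem_Ioc {T : ℕ → ℕ} (hT : Monotone T) (D : Finset ℕ) {N : ℕ}
    (hD : #D ≤ N) : ∃ j ≤ N, ∀ d ∈ D, d ∉ Set.Ioc (T j) (T (j + 1)) := by
  by_contra! h
  choose! φ hφD hφ using h
  obtain ⟨i, hi, j, hj, hij, hφij⟩ := exists_ne_map_eq_of_card_lt_of_maps_to
    (s := range (N + 1)) (t := D) (by simpa [Nat.lt_succ_iff] using hD)
    (fun j hj => hφD j (Nat.lt_succ_iff.mp (mem_range.mp hj)))
  have hi := hφ i (Nat.lt_succ_iff.mp (mem_range.mp hi))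
  have hj := hφ j (Nat.lt_succ_iff.mp (mem_range.mp hj))
  rw [hφij] at hi
  rcases Nat.lt_or_gt_of_ne hij with h | h
  · exact lt_irrefl _ (hi.2.trans_lt ((hT h).trans_lt hj.1))
  · exact lt_irrefl _ (hj.2.trans_lt ((hT h).trans_lt hi.1))

theorem exists_gapFree_scale {ι : Type*} [Fintype ι] (I : ι → ℕ × ℕ) {Q S N M : ℕ}
    (hQ : Fintype.card ι ≤ Q) (hQ1 : 1 ≤ Q) (hS : 1 ≤ S) (hN : Fintype.card ι ^ 2 ≤ N)
    (hM : (10 * Q) ^ (N + 2) * S ≤ M) :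
    ∃ g G : ℕ, (∀ a b, ¬((I a).2 + g < (I b).1 ∧ (I b).1 ≤ (I a).2 + G)) ∧
      2 * (Q * (S + g)) < G ∧ Fintype.card ι * (S + g) + 2 * (Q * (S + g)) ≤ M := by
  set T : ℕ → ℕ := fun n => (10 * Q) ^ (n + 1) * S
  have hT : Monotone T := fun m n h =>
    Nat.mul_le_mul_right _ (Nat.pow_le_pow_right (by omega) (by omega))
  -- a truncated gap `0` (when `b` does not lie to the right of `a`) is in no window
  obtain ⟨j, hj, hfree⟩ := exists_le_forall_notMem_Ioc hT
    (univ.image fun p : ι × ι => (I p.2).1 - (I p.1).2) (N := N)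
    (card_image_le.trans (by simpa [sq] using hN))
  refine ⟨T j, T (j + 1), fun a b hab => hfree _ (mem_image_of_mem _ (mem_univ (a, b)))
    (by simp only [Set.mem_Ioc]; omega), ?_⟩
  have hST : S ≤ T j := Nat.le_mul_of_pos_left S (Nat.pow_pos (by omega))
  have hTj : T (j + 1) = 10 * (Q * T j) := by simp only [T]; ring
  have hTM : T (j + 1) ≤ M := (hT (by omega : j + 1 ≤ N + 1)).trans hM
  have hQS : Q * S ≤ Q * T j := Nat.mul_le_mul_left Q hST
  have hcard : Fintype.card ι * (S + T j) ≤ Q * (S + T j) := Nat.mul_le_mul_right _ hQ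
  have hpos : 1 ≤ Q * T j := Nat.one_le_iff_ne_zero.mpr (by positivity)
  have hQST : Q * (S + T j) = Q * S + Q * T j := Nat.mul_add _ _ _
  omega

theorem eventually_log_pow_add_rpow_le :
    ∀ᶠ L : ℝ in atTop, 0 < L ∧ 4 ≤ log L ∧ 5 * log L ^ 4 + L ^ ((1 : ℝ) / 5) ≤ L := by
  have hlog := (isLittleO_pow_log_id_atTop (n := 4)).bound (show (0 : ℝ) < 1 / 10 by norm_num)
  have hpow := (tendsto_rpow_atTop (show (0 : ℝ) < 4 / 5 by norm_num)).eventually_ge_atTop 2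
  filter_upwards [eventually_gt_atTop 0, tendsto_log_atTop.eventually_ge_atTop 4, hlog, hpow]
    with L hL hc hlog hpow
  have hsplit : L ^ ((1 : ℝ) / 5) * L ^ ((4 : ℝ) / 5) = L := by
    rw [← rpow_add hL]; norm_num
  have hc4 : 0 ≤ log L ^ 4 := by positivity
  rw [norm_of_nonneg hc4, id, norm_of_nonneg hL.le] at hlog
  have := rpow_nonneg hL.le ((1 : ℝ) / 5)
  exact ⟨hL, hc, by nlinarith⟩

theorem top_scale_le_exp {L : ℝ} (hL : 0 < L) (hc : 4 ≤ log L)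
    (hLc : 5 * log L ^ 4 + L ^ ((1 : ℝ) / 5) ≤ L) {C : ℕ} (hC : (C : ℝ) ≤ log L) :
    (((10 * (⌈L ^ 2⌉₊ ^ C * C)) ^ (C ^ 2 + 2) * ⌈C * exp (L ^ ((1 : ℝ) / 5))⌉₊ : ℕ) : ℝ) ≤
      exp L := by
  set c := log L
  set u := L ^ ((1 : ℝ) / 5)
  have hLexp : exp c = L := exp_log hL
  have hu : 0 ≤ u := rpow_nonneg hL.le _
  have hc1 : c + 1 ≤ exp c := by linarith [add_one_le_exp c]
  have h10 : (10 : ℝ) ≤ exp c :=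
    le_trans (by nlinarith) (quadratic_le_exp_of_nonneg (by linarith : (0 : ℝ) ≤ c))
  have hsq : (⌈L ^ 2⌉₊ : ℝ) ≤ exp (2 * c + 1) := by
    have he : (2 : ℝ) ≤ exp 1 := by linarith [add_one_le_exp (1 : ℝ)]
    have hL1 : 1 ≤ L := by linarith
    calc (⌈L ^ 2⌉₊ : ℝ) ≤ L ^ 2 + 1 := (Nat.ceil_lt_add_one (by positivity)).le
      _ ≤ L ^ 2 * exp 1 := by nlinarith
      _ = exp (2 * c + 1) := by rw [exp_add, two_mul, exp_add, hLexp, sq]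
  have hbase : ((10 * (⌈L ^ 2⌉₊ ^ C * C) : ℕ) : ℝ) ≤ exp (3 * c ^ 2) :=
    calc ((10 * (⌈L ^ 2⌉₊ ^ C * C) : ℕ) : ℝ) = 10 * ((⌈L ^ 2⌉₊ : ℝ) ^ C * C) := by push_cast; rfl
      _ ≤ exp c * (exp (2 * c + 1) ^ C * exp c) := by
        gcongr
        exact hC.trans (by linarith)
      _ = exp (C * (2 * c + 1) + 2 * c) := by
        rw [← exp_nat_mul, ← exp_add, ← exp_add]; ring_nf
      _ ≤ exp (3 * c ^ 2) := exp_le_exp.mpr (by nlinarith)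
  have hS : (⌈C * exp u⌉₊ : ℝ) ≤ exp (c + u) :=
    calc (⌈C * exp u⌉₊ : ℝ) ≤ C * exp u + 1 := (Nat.ceil_lt_add_one (by positivity)).le
      _ ≤ (c + 1) * exp u := by nlinarith [one_le_exp hu]
      _ ≤ exp c * exp u := by gcongr
      _ = exp (c + u) := (exp_add c u).symm
  calc _ = ((10 * (⌈L ^ 2⌉₊ ^ C * C) : ℕ) : ℝ) ^ (C ^ 2 + 2) * (⌈C * exp u⌉₊ : ℝ) := by
        push_cast; rfl
    _ ≤ exp (3 * c ^ 2) ^ (C ^ 2 + 2) * exp (c + u) := by gcongr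
    _ = exp (3 * c ^ 2 * (C ^ 2 + 2) + (c + u)) := by
        rw [← exp_nat_mul, ← exp_add]; push_cast; ring_nf
    _ ≤ exp L := by
        have hC2 : (C : ℝ) ^ 2 ≤ c ^ 2 := pow_le_pow_left₀ (Nat.cast_nonneg _) hC 2
        have hc2 : 16 ≤ c ^ 2 := by nlinarith
        have hc4 : 6 * c ^ 2 + c ≤ 2 * c ^ 4 := by nlinarith
        exact exp_le_exp.mpr (by nlinarith [mul_le_mul_of_nonneg_left hC2 (sq_nonneg c)])

/-- Intervals in `{1,…,M}` are represented by pairs `(L(I), R(I))` of endpoints with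
`1 ≤ L(I) ≤ R(I) ≤ M`, standing for `{L(I), …, R(I)}`; the cardinality of such an
interval is `R(I) − L(I) + 1`.

For `M` large: let `C ≥ 1` with `C ≤ log log M`, and let `I_1,…,I_r ⊆ {1,…,M}` be
pairwise disjoint intervals with `r ≤ C` and `|I_t| ≤ C·e^{(log M)^{1/5}}`.  Then
there are pairwise disjoint intervals `J_1,…,J_s ⊆ {1,…,M}`, each containing some
`I_t`, such that every `I_t` is contained in some `J_m`, and for each `m`, writing
`B_m` for the smallest interval containing all the `I_t` contained in `J_m` (its
endpoints are characterised by `IsLeast`/`IsGreatest` below), either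
`L(B_m) − L(J_m) ≥ ((log M)²)^C·|B_m|` or `R(J_m) − R(B_m) ≥ ((log M)²)^C·|B_m|`,
with both holding if `J_m` contains neither `1` nor `M`. -/
theorem stmt9 :
    ∃ M₀ : ℕ, ∀ M : ℕ, M₀ ≤ M →
      ∀ C : ℕ, 1 ≤ C → (C : ℝ) ≤ Real.log (Real.log M) →
      ∀ r : ℕ, r ≤ C → ∀ I : Fin r → ℕ × ℕ,
      (∀ t, 1 ≤ (I t).1 ∧ (I t).1 ≤ (I t).2 ∧ (I t).2 ≤ M) →
      (∀ t t', t ≠ t' → (I t).2 < (I t').1 ∨ (I t').2 < (I t).1) →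
      (∀ t, ((I t).2 : ℝ) - (I t).1 + 1 ≤ (C : ℝ) * Real.exp ((Real.log M) ^ ((1 : ℝ) / 5))) →
      ∃ s : ℕ, ∃ J : Fin s → ℕ × ℕ,
        (∀ m, 1 ≤ (J m).1 ∧ (J m).1 ≤ (J m).2 ∧ (J m).2 ≤ M) ∧
        (∀ m m', m ≠ m' → (J m).2 < (J m').1 ∨ (J m').2 < (J m).1) ∧
        (∀ m, ∃ t, (J m).1 ≤ (I t).1 ∧ (I t).2 ≤ (J m).2) ∧
        (∀ t, ∃ m, (J m).1 ≤ (I t).1 ∧ (I t).2 ≤ (J m).2) ∧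
        (∀ m, ∀ lB rB : ℕ,
          IsLeast {x | ∃ t, ((J m).1 ≤ (I t).1 ∧ (I t).2 ≤ (J m).2) ∧ (I t).1 = x} lB →
          IsGreatest {x | ∃ t, ((J m).1 ≤ (I t).1 ∧ (I t).2 ≤ (J m).2) ∧ (I t).2 = x} rB →
          ((((Real.log M) ^ 2) ^ C * ((rB : ℝ) - lB + 1) ≤ (lB : ℝ) - (J m).1 ∨
            ((Real.log M) ^ 2) ^ C * ((rB : ℝ) - lB + 1) ≤ ((J m).2 : ℝ) - rB) ∧
          ((J m).1 ≠ 1 ∧ (J m).2 ≠ M →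
            ((Real.log M) ^ 2) ^ C * ((rB : ℝ) - lB + 1) ≤ (lB : ℝ) - (J m).1 ∧
            ((Real.log M) ^ 2) ^ C * ((rB : ℝ) - lB + 1) ≤ ((J m).2 : ℝ) - rB))) := by
  obtain ⟨M₀, hM₀⟩ := eventually_atTop.mp
    ((tendsto_log_atTop.comp tendsto_natCast_atTop_atTop).eventually eventually_log_pow_add_rpow_le)
  refine ⟨M₀, fun M hM C hC1 hC r hrC I hI _ hsize => ?_⟩
  obtain ⟨hL, hc, hLc⟩ := hM₀ M hM
  simp only [Function.comp_apply] at hL hc hLc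
  set S := ⌈C * exp (log M ^ ((1 : ℝ) / 5))⌉₊
  set Q := ⌈log M ^ 2⌉₊ ^ C * C
  have hS : ∀ t, (I t).2 + 1 ≤ (I t).1 + S := fun t => by
    have := (hsize t).trans (Nat.le_ceil _)
    exact_mod_cast (by linarith : ((I t).2 : ℝ) + 1 ≤ (I t).1 + S)
  have hceil : 1 ≤ ⌈log M ^ 2⌉₊ ^ C := Nat.one_le_pow _ _ (Nat.ceil_pos.mpr (by positivity))
  have hCQ : C ≤ Q := Nat.le_mul_of_pos_left C hceil
  have hMQ : (10 * Q) ^ (C ^ 2 + 2) * S ≤ M := by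
    have := top_scale_le_exp hL hc hLc hC
    rw [exp_log (Nat.cast_pos.mpr (Nat.pos_of_ne_zero (by rintro rfl; simp at hL)))] at this
    exact_mod_cast this
  obtain ⟨g, G, hgap, hPG, hWM⟩ := exists_gapFree_scale I (by simpa using hrC.trans hCQ) (by omega)
    (Nat.ceil_pos.mpr (by positivity)) (by simpa using Nat.pow_le_pow_left hrC 2) hMQ
  refine exists_isPaddedCover I hI hS hgap hPG hWM (by positivity) ?_
  have hK : ((log M) ^ 2) ^ C * r ≤ (⌈log M ^ 2⌉₊ : ℝ) ^ C * C := by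
    gcongr
    exact Nat.le_ceil _
  simp only [Fintype.card_fin, Q]
  push_cast
  rw [← mul_assoc]
  exact mul_le_mul_of_nonneg_right hK (by positivity)
end

section
/- For any integers C ≥ 2, i ≥ 1 and m ≥ 1, the number of tuples (a_1,…,a_{m+i}) ∈ {0,1,…,C−1}^{m+i} such that f_i(a_t, a_{t+1}, …, a_{t+i}) is even for every t with 1 ≤ t ≤ m, is at most (2/3)^m · C^{m+i}. Equivalently: if a_1,…,a_{m+i} are chosen independently and uniformly at random from {0,…,C−1}, the probability that all m of the terms in positions 1,…,m after i iterations of consecutive differencing are even is at most (2/3)^m. -/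
/-- Extend a tuple `x ∈ {0,…,C−1}^M` to a sequence `ℕ → ℕ` (by `0` outside). -/
def extend (M C : ℕ) (x : Fin M → Fin C) : ℕ → ℕ :=
  fun n => if h : n < M then (x ⟨n, h⟩ : ℕ) else 0

/-! Modulo 2 the differencing step is addition, so `f_i(a_t, …, a_{t+i})` has the parity of
`a_{t+i}` plus a term depending only on `a_t, …, a_{t+i-1}`. Once the first `i` entries are
chosen, each constraint therefore fixes the parity of one further entry, leaving at most
`⌈C/2⌉ ≤ 2C/3` choices for it. -/

lemma Nat.dist_mod_two (a b : ℕ) : Nat.dist a b % 2 = (a + b) % 2 := by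
  unfold Nat.dist; omega

lemma iterDiff_succ_s11 (i : ℕ) (a : ℕ → ℕ) :
    iterDiff (i + 1) a = iterDiff i (fun n => Nat.dist (a n) (a (n + 1))) :=
  Function.iterate_succ_apply _ _ _

lemma iterDiff_mod_two_eq_iff {i t : ℕ} {a b : ℕ → ℕ} (h : ∀ j < i, a (t + j) = b (t + j)) :
    iterDiff i a t % 2 = iterDiff i b t % 2 ↔ a (t + i) % 2 = b (t + i) % 2 := by
  induction i generalizing a b with
  | zero => simp [iterDiff]
  | succ i ih =>
    have hdiff : ∀ j < i, Nat.dist (a (t + j)) (a (t + j + 1))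
        = Nat.dist (b (t + j)) (b (t + j + 1)) := fun j hj => by
      rw [h j (by omega), add_assoc, h (j + 1) (by omega)]
    rw [iterDiff_succ_s11, iterDiff_succ_s11, ih hdiff, Nat.dist_mod_two, Nat.dist_mod_two,
      h i (by omega), ← add_assoc]
    omega

lemma eq_of_even_iterDiff {i m : ℕ} {a b : ℕ → ℕ}
    (ha : ∀ t < m, Even (iterDiff i a t)) (hb : ∀ t < m, Even (iterDiff i b t))
    (hinit : ∀ n < i, a n = b n) (hhalf : ∀ t < m, a (t + i) / 2 = b (t + i) / 2) :
    ∀ n < m + i, a n = b n := by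
  intro n
  induction n using Nat.strong_induction_on with
  | _ n ih =>
    intro hn
    rcases lt_or_ge n i with hni | hni
    · exact hinit n hni
    obtain ⟨t, rfl⟩ : ∃ t, n = t + i := ⟨n - i, by omega⟩
    have hparity : a (t + i) % 2 = b (t + i) % 2 :=
      (iterDiff_mod_two_eq_iff fun j hj => ih (t + j) (by omega) (by omega)).mp <| by
        rw [Nat.even_iff.mp (ha t (by omega)), Nat.even_iff.mp (hb t (by omega))]
    have := hhalf t (by omega)
    omega

lemma extend_of_lt {M C n : ℕ} (x : Fin M → Fin C) (h : n < M) :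
    extend M C x n = x ⟨n, h⟩ :=
  dif_pos h

lemma eq_of_extend_eq {M C : ℕ} {x y : Fin M → Fin C}
    (h : ∀ n < M, extend M C x n = extend M C y n) : x = y :=
  funext fun j => Fin.ext <| by simpa only [extend_of_lt _ j.isLt] using h j j.isLt

lemma card_even_iterDiff_le (C i m : ℕ) :
    Nat.card {x : Fin (m + i) → Fin C // ∀ t, t < m → Even (iterDiff i (extend (m + i) C x) t)}
      ≤ C ^ i * ((C + 1) / 2) ^ m := by
  let restrict : {x : Fin (m + i) → Fin C //
      ∀ t, t < m → Even (iterDiff i (extend (m + i) C x) t)} →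
      (Fin i → Fin C) × (Fin m → Fin ((C + 1) / 2)) := fun x =>
    (fun j => x.1 (Fin.castLE (Nat.le_add_left i m) j),
     fun t => ⟨x.1 (t.addNat i) / 2, by have := (x.1 (t.addNat i)).isLt; omega⟩)
  have hrestrict : Function.Injective restrict := by
    rintro ⟨x, hx⟩ ⟨y, hy⟩ hxy
    simp only [restrict, Prod.mk.injEq, funext_iff, Fin.ext_iff] at hxy
    refine Subtype.ext <| eq_of_extend_eq <|
      eq_of_even_iterDiff hx hy (fun n hn => ?_) (fun t ht => ?_)
    · rw [extend_of_lt _ (by omega), extend_of_lt _ (by omega)]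
      exact hxy.1 ⟨n, hn⟩
    · rw [extend_of_lt _ (by omega), extend_of_lt _ (by omega)]
      exact hxy.2 ⟨t, ht⟩
  simpa [Nat.card_eq_fintype_card] using Nat.card_le_card_of_injective restrict hrestrict

theorem stmt11_general (C : ℕ) (hC : 2 ≤ C) (i : ℕ) (m : ℕ) :
    (Nat.card {x : Fin (m + i) → Fin C //
        ∀ t, t < m → Even (iterDiff i (extend (m + i) C x) t)} : ℝ) ≤
      (2 / 3 : ℝ) ^ m * (C : ℝ) ^ (m + i) := by
  have hhalf : (((C + 1) / 2 : ℕ) : ℝ) ≤ 2 / 3 * C := by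
    have : (3 : ℝ) * ((C + 1) / 2 : ℕ) ≤ 2 * C := by
      exact_mod_cast (by omega : 3 * ((C + 1) / 2) ≤ 2 * C)
    linarith
  calc (Nat.card {x : Fin (m + i) → Fin C //
        ∀ t, t < m → Even (iterDiff i (extend (m + i) C x) t)} : ℝ)
      ≤ (C : ℝ) ^ i * (((C + 1) / 2 : ℕ) : ℝ) ^ m := by
        exact_mod_cast card_even_iterDiff_le C i m
    _ ≤ (C : ℝ) ^ i * (2 / 3 * C) ^ m := by gcongr
    _ = (2 / 3 : ℝ) ^ m * (C : ℝ) ^ (m + i) := by rw [mul_pow, pow_add]; ring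

/-- For any `C ≥ 2`, `i ≥ 1`, `m ≥ 1`, the number of tuples
`(a_1,…,a_{m+i}) ∈ {0,…,C−1}^{m+i}` such that `f_i(a_t,…,a_{t+i})` is even for every
`1 ≤ t ≤ m` is at most `(2/3)^m · C^{m+i}`. -/
theorem stmt11 (C : ℕ) (hC : 2 ≤ C) (i : ℕ) (hi : 1 ≤ i) (m : ℕ) (hm : 1 ≤ m) :
    (Nat.card {x : Fin (m + i) → Fin C //
        ∀ t, t < m → Even (iterDiff i (extend (m + i) C x) t)} : ℝ) ≤
      (2 / 3 : ℝ) ^ m * (C : ℝ) ^ (m + i) :=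
  stmt11_general C hC i m
end

section
/- Let a_1,…,a_{n+1} be non-negative integers with d := max_j a_j ≥ 1, and let b_j = |a_j − a_{j+1}| for 1 ≤ j ≤ n. Fix 1 ≤ l ≤ r ≤ n and suppose b_j ∈ {0,d} for every j with l ≤ j ≤ r, and that b_j = d for at least one such j. Then a_j ∈ {0,d} for every j with l ≤ j ≤ r+1, and a_j = d for at least one such j. (In other words, any {0,d}-block containing a d after one iteration of consecutive differencing must come from a {0,d}-block of greater length containing a d.) -/
/-! A jump of exactly `d` between two terms of `[0, d]` can only go between `0` and `d`, and a jump
of `0` or `d` between two terms of `[0, d]` keeps a term in `{0, d}` exactly when the other one is.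
So along a `{0, d}`-block of differences membership in `{0, d}` propagates in both directions
from the position of a jump `d`, whose two ends are `0` and `d`. -/

namespace Nat

theorem forall_of_iff_succ {P : ℕ → Prop} {l m k : ℕ}
    (hstep : ∀ j, l ≤ j → j < m → (P j ↔ P (j + 1)))
    (hkl : l ≤ k) (hkm : k ≤ m) (hk : P k) :
    ∀ j, l ≤ j → j ≤ m → P j := by
  have hbase : ∀ j, l ≤ j → j ≤ m → (P j ↔ P l) := by
    intro j hlj
    induction j, hlj using Nat.le_induction with
    | base => exact fun _ ↦ Iff.rfl
    | succ j hlj ih =>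
      intro hjm
      exact (hstep j hlj hjm).symm.trans (ih (by omega))
  intro j hlj hjm
  exact (hbase j hlj hjm).2 ((hbase k hkl hkm).1 hk)

theorem dist_eq_of_le_of_le {x y d : ℕ} (hx : x ≤ d) (hy : y ≤ d) (h : Nat.dist x y = d) :
    (x = 0 ∧ y = d) ∨ (x = d ∧ y = 0) := by
  simp only [Nat.dist] at h
  omega

theorem eq_zero_or_eq_iff_of_dist {x y d : ℕ} (hx : x ≤ d) (hy : y ≤ d)
    (h : Nat.dist x y = 0 ∨ Nat.dist x y = d) :
    (x = 0 ∨ x = d) ↔ (y = 0 ∨ y = d) := by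
  simp only [Nat.dist] at h
  omega

end Nat

theorem stmt14_general (n : ℕ) (a : ℕ → ℕ) (d : ℕ)
    (hmax : ∀ j, 1 ≤ j → j ≤ n + 1 → a j ≤ d)
    (b : ℕ → ℕ) (hb : ∀ j, b j = Nat.dist (a j) (a (j + 1)))
    (l r : ℕ) (hl : 1 ≤ l) (hrn : r ≤ n)
    (hblock : ∀ j, l ≤ j → j ≤ r → b j = 0 ∨ b j = d)
    (hone : ∃ j, l ≤ j ∧ j ≤ r ∧ b j = d) :
    (∀ j, l ≤ j → j ≤ r + 1 → a j = 0 ∨ a j = d) ∧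
      (∃ j, l ≤ j ∧ j ≤ r + 1 ∧ a j = d) := by
  obtain ⟨j₀, hlj₀, hj₀r, hj₀⟩ := hone
  have hle : ∀ j, l ≤ j → j ≤ r + 1 → a j ≤ d := fun j hlj hjr ↦ hmax j (by omega) (by omega)
  have hends := Nat.dist_eq_of_le_of_le (hle j₀ hlj₀ (by omega)) (hle (j₀ + 1) (by omega) (by omega))
    (hb j₀ ▸ hj₀)
  refine ⟨Nat.forall_of_iff_succ (P := fun j ↦ a j = 0 ∨ a j = d) (k := j₀) ?_ hlj₀ (by omega)
    (by omega), ?_⟩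
  · intro j hlj hjr
    exact Nat.eq_zero_or_eq_iff_of_dist (hle j hlj (by omega)) (hle (j + 1) (by omega) (by omega))
      (hb j ▸ hblock j hlj (by omega))
  · rcases hends with ⟨-, h⟩ | ⟨h, -⟩
    · exact ⟨j₀ + 1, by omega, by omega, h⟩
    · exact ⟨j₀, hlj₀, by omega, h⟩

/-- Let `a 1, …, a (n+1)` be non-negative integers with `d := max_j a j ≥ 1`, and let
`b j = |a j − a (j+1)|` for `1 ≤ j ≤ n`.  Fix `1 ≤ l ≤ r ≤ n` and suppose
`b j ∈ {0, d}` for every `l ≤ j ≤ r`, with `b j = d` for at least one such `j`.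
Then `a j ∈ {0, d}` for every `l ≤ j ≤ r + 1`, and `a j = d` for at least one such `j`. -/
theorem stmt14 (n : ℕ) (a : ℕ → ℕ) (d : ℕ) (hd : 1 ≤ d)
    (hmax : ∀ j, 1 ≤ j → j ≤ n + 1 → a j ≤ d)
    (hattain : ∃ j, 1 ≤ j ∧ j ≤ n + 1 ∧ a j = d)
    (b : ℕ → ℕ) (hb : ∀ j, b j = Nat.dist (a j) (a (j + 1)))
    (l r : ℕ) (hl : 1 ≤ l) (hlr : l ≤ r) (hrn : r ≤ n)
    (hblock : ∀ j, l ≤ j → j ≤ r → b j = 0 ∨ b j = d)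
    (hone : ∃ j, l ≤ j ∧ j ≤ r ∧ b j = d) :
    (∀ j, l ≤ j → j ≤ r + 1 → a j = 0 ∨ a j = d) ∧
      (∃ j, l ≤ j ∧ j ≤ r + 1 ∧ a j = d) :=
  stmt14_general n a d hmax b hb l r hl hrn hblock hone
end
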